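/- For any n, k ≥ 0 with T(k)∘ϑ^n ≤ n, the spine satisfies the concatenation identity 𝕊₀ⁿ = [𝕊₀^{n − T(k)∘ϑ^n}, 𝒬(k)∘ϑ^n, …, 𝒬(1)∘ϑ^n]. -/

import Mathlib

open scoped Classical NNReal
noncomputable section

/-- Finite point measures on `(0,∞)`, modeled as multisets of atoms in `ℝ≥0`. -/
abbrev PtM := Multiset ℝ≥0

/-- A stick: a life-length together with a finite point measure of birth times. -/
abbrev Stick := ℝ≥0 × PtM

/-- The space of doubly infinite sequences of sticks. -/
abbrev Om := ℤ → Stick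

/-- The shift operator `θ_n`. -/
def theta (n : ℤ) (ω : Om) : Om := fun k => ω (n + k)

/-- The dual (time-reversal) operator `ϑ^n`. -/
def dual (n : ℤ) (ω : Om) : Om := fun k => ω (n - k - 1)

/-- Life length of the `k`-th individual. -/
def Vc (ω : Om) (k : ℤ) : ℝ≥0 := (ω k).1

/-- Point measure (ages at childbearing) of the `k`-th individual. -/
def Pc (ω : Om) (k : ℤ) : PtM := (ω k).2

/-- The Lukasiewicz path `S`. -/
def Sw (ω : Om) (n : ℤ) : ℤ :=
  if 0 ≤ n then ∑ k ∈ Finset.range n.toNat, ((Multiset.card (Pc ω (k : ℤ)) : ℤ) - 1)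
  else - ∑ k ∈ Finset.range (-n).toNat, ((Multiset.card (Pc ω (-(k : ℤ) - 1)) : ℤ) - 1)

/-- `π(ν)`: the supremum of the support (largest atom) of a finite point measure. -/
def piM (ν : PtM) : ℝ≥0 := ν.sup

/-- `Υ_j(ν)`: removes the `j` largest atoms of `ν`. -/
def upsilon (j : ℕ) (ν : PtM) : PtM :=
  ((ν.sort (· ≤ ·)).take (Multiset.card ν - j) : List ℝ≥0)

/-- The map `Φ` driving the spine process dynamics. -/
def phiSp (Y : List PtM) (ν : PtM) : List PtM :=
  if ν = 0 then
    match Y.reverse.dropWhile (fun m => decide (Multiset.card m < 2)) with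
    | [] => []
    | h :: t => (upsilon 1 h :: t).reverse
  else Y ++ [ν]

/-- The spine process `𝕊₀ⁿ`. -/
def spine (ω : Om) : ℕ → List PtM
  | 0 => []
  | n + 1 => phiSp (spine ω n) (Pc ω (n : ℤ))

/-- `π` extended to finite sequences of point measures. -/
def piL (Y : List PtM) : ℝ≥0 := (Y.map piM).sum

/-- The chronological height process `ℍ(n) = π(𝕊₀ⁿ)`. -/
def Hchr (ω : Om) (n : ℕ) : ℝ≥0 := piL (spine ω n)

/-- The genealogical height process
`𝓗(n) = #{k ∈ {0,…,n−1} : S(k+1) ≤ min_{k+1 ≤ j ≤ n} S(j)}`. -/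
def genH (ω : Om) (n : ℕ) : ℕ :=
  ((Finset.range n).filter
    (fun k : ℕ => ∀ j : ℕ, j ∈ Finset.Icc (k + 1) n → Sw ω ((k : ℤ) + 1) ≤ Sw ω (j : ℤ))).card

/-- Weak ascending ladder height times `T(k)` (valued `⊤` if nonexistent). -/
def ladderT (ω : Om) : ℕ → ℕ∞
  | 0 => 0
  | k + 1 => sInf {x : ℕ∞ | ∃ m j : ℕ, x = (m : ℕ∞) ∧ ladderT ω k = (j : ℕ∞) ∧
      j < m ∧ Sw ω (j : ℤ) ≤ Sw ω (m : ℤ)}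

/-- `T^{-1}(n) = min{k ≥ 0 : T(k) ≥ n}`. -/
def Tinv (ω : Om) (n : ℕ) : ℕ := sInf {k : ℕ | (n : ℕ∞) ≤ ladderT ω k}

/-- `T̃^{-1}(n) = max{k ≥ 0 : T(k) ≤ n}`. -/
def tildeTinv (ω : Om) (n : ℕ) : ℕ := sSup {k : ℕ | ladderT ω k ≤ (n : ℕ∞)}

/-- First passage time upward `τ_ℓ = inf{k > 0 : S(k) ≥ ℓ}`. -/
def tauUp (ω : Om) (ℓ : ℤ) : ℕ∞ :=
  sInf {x : ℕ∞ | ∃ k : ℕ, x = (k : ℕ∞) ∧ 0 < k ∧ ℓ ≤ Sw ω (k : ℤ)}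

/-- First hitting time downward `τ⁻_ℓ = inf{k ≥ 0 : S(k) = −ℓ}`. -/
def tauDown (ω : Om) (ℓ : ℤ) : ℕ∞ :=
  sInf {x : ℕ∞ | ∃ k : ℕ, x = (k : ℕ∞) ∧ Sw ω (k : ℤ) = -ℓ}

/-- `τ_ℓ` as a natural number (junk value `0` when infinite). -/
def tauUpN (ω : Om) (ℓ : ℤ) : ℕ := (tauUp ω ℓ).toNat

/-- The undershoot `ζ_ℓ = ℓ − S(τ_ℓ − 1)`. -/
def zetaU (ω : Om) (ℓ : ℤ) : ℤ := ℓ - Sw ω ((tauUpN ω ℓ : ℤ) - 1)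

/-- `μ_ℓ = Υ_{ζ_ℓ}(𝒫_{τ_ℓ − 1})`. -/
def muU (ω : Om) (ℓ : ℤ) : PtM := upsilon (zetaU ω ℓ).toNat (Pc ω ((tauUpN ω ℓ : ℤ) - 1))

/-- `𝒬(k) = μ₀ ∘ θ_{T(k−1)}`. -/
def Qcal (ω : Om) (k : ℕ) : PtM := muU (theta ((ladderT ω (k - 1)).toNat : ℤ) ω) 0

/-- `𝕐(k) = π(𝒬(k))`. -/
def Ybb (ω : Om) (k : ℕ) : ℝ≥0 := piM (Qcal ω k)

/-- The backward maximum `L(m) = max_{0 ≤ k ≤ m} S(−k)`. -/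
def Lmax (ω : Om) (m : ℕ) : ℤ :=
  Finset.sup' (Finset.range (m + 1)) Finset.nonempty_range_add_one (fun k => Sw ω (-(k : ℤ)))

/-- The ancestor set `𝒜(n) = {n − T(k)∘ϑ^n : k ≥ 0}` (only finite ladder times). -/
def Aset (ω : Om) (n : ℕ) : Set ℤ :=
  {a | ∃ k j : ℕ, ladderT (dual (n : ℤ) ω) k = (j : ℕ∞) ∧ a = (n : ℤ) - (j : ℤ)}

/-- `mrca(m,n) = max(𝒜(m) ∩ 𝒜(n))`. -/
def mrcaZ (ω : Om) (m n : ℕ) : ℤ := sSup (Aset ω m ∩ Aset ω n)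

/-- `χ(m,k) = inf{j ≥ m+1 : S(j) = S(m+1) − k}`. -/
def chiT (ω : Om) (m k : ℕ) : ℕ∞ :=
  sInf {x : ℕ∞ | ∃ j : ℕ, x = (j : ℕ∞) ∧ m + 1 ≤ j ∧
    Sw ω (j : ℤ) = Sw ω ((m : ℤ) + 1) - (k : ℤ)}

/-- `χ(m) = inf{j ≥ m+1 : S(j) = S(m) − 1}`. -/
def chiF (ω : Om) (m : ℕ) : ℕ∞ :=
  sInf {x : ℕ∞ | ∃ j : ℕ, x = (j : ℕ∞) ∧ m + 1 ≤ j ∧ Sw ω (j : ℤ) = Sw ω (m : ℤ) - 1}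

/-- The functional `D_ℓ(𝕊₀^m)` of the spine, expressed through the dual walk:
`D_ℓ = (Σ_{i : 0 < T(i) ≤ min(τ_ℓ, m)} 𝕐(i) − 1_{τ_ℓ ≤ m} π(μ_ℓ)) ∘ ϑ^m`, with `D_0 ≡ 0`. -/
def Dfun (ω : Om) (m : ℕ) (ℓ : ℤ) : ℝ :=
  if ℓ < 1 then 0 else
    (∑ i ∈ (Finset.Icc 1 m).filter
        (fun i => 0 < ladderT (dual (m : ℤ) ω) i ∧
          ladderT (dual (m : ℤ) ω) i ≤ min (tauUp (dual (m : ℤ) ω) ℓ) (m : ℕ∞)),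
      (Ybb (dual (m : ℤ) ω) i : ℝ))
    - (if tauUp (dual (m : ℤ) ω) ℓ ≤ (m : ℕ∞) then (piM (muU (dual (m : ℤ) ω) ℓ) : ℝ) else 0)

/-- `K_j = 2𝒱(j−1) − ℍ(j)`. -/
def Kt (ω : Om) (j : ℕ) : ℝ := 2 * ∑ k ∈ Finset.range j, (Vc ω (k : ℤ) : ℝ) - (Hchr ω j : ℝ)

/-- The chronological contour process: on `[K_n, K_{n+1}]` it increases at rate `+1` from
`ℍ(n)` up to `ℍ(n) + V_n` and then decreases at rate `−1` down to `ℍ(n+1)`. -/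
def contour (ω : Om) (t : ℝ) : ℝ :=
  let n := sSup {j : ℕ | Kt ω j ≤ t}
  min ((Hchr ω n : ℝ) + (t - Kt ω n)) ((Hchr ω (n + 1) : ℝ) + (Kt ω (n + 1) - t))


/-! The spine is a stack: `phiSp` pushes the birth-time measure of an individual with children,
and at a leaf pops exhausted individuals and removes one atom from the first one left. Pushing
`ν` raises the Lukasiewicz path by `card ν - 1` and each pop lowers it by one, so counting steps
shows that the individual on top of the stack at time `n` is the last `j < n` with
`S(j) ≤ S(n)`, with `S(j+1) - S(n)` of its atoms removed. Read backwards from `n`, this `j` is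
`n - τ₀ ∘ ϑ^n`, and iterating along the ladder epochs of the reversed walk peels off
`𝒬(k) ∘ ϑ^n, …, 𝒬(1) ∘ ϑ^n`. -/

lemma card_upsilon (j : ℕ) (ν : PtM) : Multiset.card (upsilon j ν) = Multiset.card ν - j := by
  simp only [upsilon, Multiset.coe_card, List.length_take, Multiset.length_sort]
  omega

lemma upsilon_zero (ν : PtM) : upsilon 0 ν = ν := by
  rw [upsilon, Nat.sub_zero, ← Multiset.length_sort (· ≤ ·), List.take_length, Multiset.sort_eq]

lemma upsilon_one_upsilon (i : ℕ) (ν : PtM) : upsilon 1 (upsilon i ν) = upsilon (i + 1) ν := by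
  have hsorted : ((ν.sort (· ≤ ·)).take (Multiset.card ν - i)).Pairwise (· ≤ ·) :=
    (Multiset.pairwise_sort _ _).sublist (List.take_sublist _ _)
  have hsort : Multiset.sort (upsilon i ν) (· ≤ ·) = (ν.sort (· ≤ ·)).take (Multiset.card ν - i) :=
    List.Perm.eq_of_pairwise' (Multiset.pairwise_sort _ _) hsorted
      (Multiset.coe_eq_coe.mp (Multiset.sort_eq _ _))
  rw [upsilon, hsort, List.take_take, card_upsilon, upsilon]
  congr 3
  omega

lemma phiSp_of_ne_zero (Y : List PtM) {ν : PtM} (h : ν ≠ 0) : phiSp Y ν = Y ++ [ν] := by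
  simp [phiSp, h]

/-- `Φ(·, 0)`: the spine move at an individual without children. -/
def popSp (Y : List PtM) : List PtM := phiSp Y 0

lemma popSp_append_of_card_lt_two (Y : List PtM) {ν : PtM} (h : Multiset.card ν < 2) :
    popSp (Y ++ [ν]) = popSp Y := by
  simp only [popSp, phiSp, if_true, List.reverse_append, List.reverse_singleton,
    List.singleton_append]
  rw [List.dropWhile_cons_of_pos (by rw [decide_eq_true_eq]; omega)]

lemma popSp_append_of_two_le_card (Y : List PtM) {ν : PtM} (h : 2 ≤ Multiset.card ν) :
    popSp (Y ++ [ν]) = Y ++ [upsilon 1 ν] := by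
  simp only [popSp, phiSp, if_true, List.reverse_append, List.reverse_singleton,
    List.singleton_append]
  rw [List.dropWhile_cons_of_neg (by rw [decide_eq_true_eq]; omega)]
  simp

lemma popSp_iterate_append {i : ℕ} (Y : List PtM) {ν : PtM} (h : i < Multiset.card ν) :
    popSp^[i] (Y ++ [ν]) = Y ++ [upsilon i ν] := by
  induction i with
  | zero => rw [Function.iterate_zero_apply, upsilon_zero]
  | succ i ih =>
    rw [Function.iterate_succ_apply', ih (by omega), popSp_append_of_two_le_card _
      (by rw [card_upsilon]; omega), upsilon_one_upsilon]

lemma popSp_iterate_card_append (Y : List PtM) {ν : PtM} (h : ν ≠ 0) :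
    popSp^[Multiset.card ν] (Y ++ [ν]) = popSp Y := by
  have hpos : 0 < Multiset.card ν := Multiset.card_pos.mpr h
  obtain ⟨i, hi⟩ : ∃ i, Multiset.card ν = i + 1 := ⟨_, (Nat.sub_one_add_one hpos.ne').symm⟩
  rw [hi, Function.iterate_succ_apply', popSp_iterate_append _ (by omega),
    popSp_append_of_card_lt_two _ (by rw [card_upsilon]; omega)]

lemma spine_succ (ω : Om) (m : ℕ) : spine ω (m + 1) = phiSp (spine ω m) (Pc ω m) := rfl

lemma Sw_natCast (ω : Om) (m : ℕ) :
    Sw ω m = ∑ k ∈ Finset.range m, ((Multiset.card (Pc ω k) : ℤ) - 1) := by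
  simp [Sw]

lemma Sw_succ (ω : Om) (m : ℕ) :
    Sw ω (m + 1 : ℕ) = Sw ω m + ((Multiset.card (Pc ω m) : ℤ) - 1) := by
  rw [Sw_natCast, Sw_natCast, Finset.sum_range_succ]

/- Induction on `n`: a childless individual costs one pop and lowers `S` by one, while an
individual with `c` children is pushed, raises `S` by `c - 1`, and is gone after `c` pops. -/
lemma popSp_iterate_spine (ω : Om) {n j : ℕ} {ℓ : ℤ} (hjn : j < n) (hj : Sw ω j ≤ ℓ)
    (hgt : ∀ r : ℕ, j < r → r < n → ℓ < Sw ω r) (hℓ : ℓ ≤ Sw ω n) :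
    popSp^[(Sw ω n - ℓ).toNat] (spine ω n) =
      spine ω j ++ [upsilon (Sw ω (j + 1 : ℕ) - ℓ).toNat (Pc ω j)] := by
  induction n with
  | zero => omega
  | succ m ih =>
    have hS := Sw_succ ω m
    by_cases hP : Pc ω m = 0
    · rw [hP, Multiset.card_zero] at hS
      have hjm : j < m := by
        rcases Nat.lt_succ_iff_lt_or_eq.mp hjn with h | rfl
        · exact h
        · omega
      have hℓm : ℓ < Sw ω m := hgt m hjm (by omega)
      have hcount : (Sw ω m - ℓ).toNat = (Sw ω (m + 1 : ℕ) - ℓ).toNat + 1 := by omega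
      rw [spine_succ, hP, ← popSp, ← Function.iterate_succ_apply, Nat.succ_eq_add_one, ← hcount]
      exact ih hjm (fun r h₁ h₂ => hgt r h₁ (by omega)) hℓm.le
    · rw [spine_succ, phiSp_of_ne_zero _ hP]
      have hcard : 0 < Multiset.card (Pc ω m) := Multiset.card_pos.mpr hP
      rcases Nat.lt_succ_iff_lt_or_eq.mp hjn with hjm | rfl
      · have hℓm : ℓ < Sw ω m := hgt m hjm (by omega)
        rw [show (Sw ω (m + 1 : ℕ) - ℓ).toNat
            = ((Sw ω m - ℓ).toNat - 1) + Multiset.card (Pc ω m) by omega,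
          Function.iterate_add_apply, popSp_iterate_card_append _ hP,
          ← Function.iterate_succ_apply, Nat.succ_eq_add_one, Nat.sub_one_add_one (by omega)]
        exact ih hjm (fun r h₁ h₂ => hgt r h₁ (by omega)) hℓm.le
      · exact popSp_iterate_append _ (by omega)

lemma Pc_dual (ω : Om) {n m : ℕ} (h : m < n) : Pc (dual n ω) m = Pc ω (n - m - 1 : ℕ) := by
  simp only [Pc, dual]
  congr 2
  omega

lemma Sw_dual (ω : Om) {n m : ℕ} (h : m ≤ n) : Sw (dual n ω) m = Sw ω n - Sw ω (n - m : ℕ) := by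
  induction m with
  | zero => simp [Sw]
  | succ m ih =>
    rw [Sw_succ, ih (by omega), Pc_dual ω (by omega), show n - m - 1 = n - (m + 1) by omega,
      show n - m = n - (m + 1) + 1 by omega, Sw_succ]
    ring

lemma Sw_theta (ω : Om) (a m : ℕ) : Sw (theta a ω) m = Sw ω (a + m : ℕ) - Sw ω a := by
  induction m with
  | zero => simp [Sw]
  | succ m ih =>
    rw [Sw_succ, ih, ← Nat.add_assoc, Sw_succ]
    simp only [Pc, theta, Nat.cast_add]
    ring

lemma theta_dual (ω : Om) {n j : ℕ} (h : j ≤ n) : theta j (dual n ω) = dual (n - j : ℕ) ω := by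
  funext i
  simp only [theta, dual]
  congr 1
  omega

lemma sInf_natCast_eq_natCast_iff {P : ℕ → Prop} {t : ℕ} :
    sInf {x : ℕ∞ | ∃ k : ℕ, x = k ∧ P k} = t ↔ IsLeast {k | P k} t := by
  constructor
  · intro h
    have hne : {x : ℕ∞ | ∃ k : ℕ, x = k ∧ P k}.Nonempty := by
      by_contra he
      rw [Set.not_nonempty_iff_eq_empty.mp he, sInf_empty] at h
      exact ENat.natCast_ne_top t h.symm
    obtain ⟨k, hk, hPk⟩ := h ▸ csInf_mem hne
    refine ⟨Nat.cast_injective hk ▸ hPk, fun m hm => ?_⟩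
    have hle : sInf {x : ℕ∞ | ∃ k : ℕ, x = k ∧ P k} ≤ m := sInf_le ⟨m, rfl, hm⟩
    exact_mod_cast h ▸ hle
  · intro h
    refine IsLeast.csInf_eq ⟨⟨t, rfl, h.1⟩, ?_⟩
    rintro _ ⟨k, rfl, hk⟩
    exact_mod_cast h.2 hk

lemma spine_eq_append_muU_dual (ω : Om) {n t : ℕ} (ht : tauUp (dual n ω) 0 = t) (htn : t ≤ n) :
    spine ω n = spine ω (n - t) ++ [muU (dual n ω) 0] := by
  obtain ⟨⟨ht0, htS⟩, hmin⟩ := sInf_natCast_eq_natCast_iff.mp ht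
  rw [Sw_dual ω htn] at htS
  have hgt : ∀ r : ℕ, n - t < r → r < n → Sw ω n < Sw ω r := by
    intro r h₁ h₂
    by_contra! hr
    have := hmin (a := n - r)
      ⟨by omega, by rw [Sw_dual ω (by omega), Nat.sub_sub_self h₂.le]; omega⟩
    omega
  have hspine := popSp_iterate_spine ω (j := n - t) (ℓ := Sw ω n) (by omega) (by omega) hgt le_rfl
  rw [sub_self, Int.toNat_zero, Function.iterate_zero_apply] at hspine
  rw [hspine, muU, zetaU, tauUpN, ht, ENat.toNat_natCast,
    show ((t : ℤ) - 1) = (t - 1 : ℕ) by omega, Pc_dual ω (by omega), Sw_dual ω (by omega),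
    show n - (t - 1) - 1 = n - t by omega, show n - (t - 1) = n - t + 1 by omega]
  congr 4
  ring

lemma ladderT_succ_eq_natCast (ω : Om) {k t : ℕ} (h : ladderT ω (k + 1) = t) :
    ∃ j : ℕ, ladderT ω k = j ∧ IsLeast {m | j < m ∧ Sw ω j ≤ Sw ω m} t := by
  rw [ladderT] at h
  cases hk : ladderT ω k using ENat.recTopCoe with
  | top => simp [hk] at h
  | coe j =>
    refine ⟨j, rfl, sInf_natCast_eq_natCast_iff.mp (Eq.trans ?_ h)⟩
    congr
    ext x
    simp [hk]

lemma tauUp_theta_of_isLeast (ω : Om) {j t : ℕ}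
    (h : IsLeast {m | j < m ∧ Sw ω j ≤ Sw ω m} t) : tauUp (theta j ω) 0 = (t - j : ℕ) := by
  obtain ⟨⟨hjt, hS⟩, hmin⟩ := h
  refine sInf_natCast_eq_natCast_iff.mpr ⟨⟨by omega, ?_⟩, fun m ⟨hm, hmS⟩ => ?_⟩
  · rw [Sw_theta, Nat.add_sub_cancel' hjt.le]
    omega
  · rw [Sw_theta] at hmS
    have := hmin (a := j + m) ⟨by omega, by omega⟩
    omega

theorem stmt13 (ω : Om) (n k t : ℕ)
    (hT : ladderT (dual (n : ℤ) ω) k = (t : ℕ∞)) (htn : t ≤ n) :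
    spine ω n
      = spine ω (n - t) ++ (List.range k).map (fun i => Qcal (dual (n : ℤ) ω) (k - i)) := by
  induction k generalizing t with
  | zero =>
    obtain rfl : t = 0 := by rw [ladderT] at hT; exact_mod_cast hT.symm
    simp
  | succ k ih =>
    obtain ⟨j, hj, hleast⟩ := ladderT_succ_eq_natCast _ hT
    have hjt : j < t := hleast.1.1
    have htau := tauUp_theta_of_isLeast _ hleast
    rw [theta_dual ω (by omega)] at htau
    have hQ : Qcal (dual n ω) (k + 1) = muU (dual (n - j : ℕ) ω) 0 := by
      rw [Qcal, Nat.add_sub_cancel, hj, ENat.toNat_natCast, theta_dual ω (by omega)]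
    rw [ih j hj (by omega), spine_eq_append_muU_dual ω htau (by omega),
      tsub_tsub_tsub_cancel_right hjt.le, List.range_succ_eq_map, List.map_cons, List.map_map,
      Nat.sub_zero, hQ]
    simp [Function.comp_def]
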